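/- A compact Hausdorff space is metrizable if and only if its diagonal is a Gδ subset of X × X. -/

import Mathlib

/-!
A metrizable space is perfectly normal, so its closed diagonal is a Gδ. Conversely, the only
uniformity of a compact Hausdorff space is the neighbourhood filter `𝓝ˢ Δ` of the diagonal, and a
Hausdorff uniform space is metrizable once its uniformity is countably generated. If `Δ = ⋂ Uₙ`,
shrink each `Uₙ` to a compact closed neighbourhood `Lₙ` of `Δ`; since `⋂ Lₙ = Δ`, compactness
forces every open `O ⊇ Δ` to contain a finite intersection of the `Lₙ`, so the `Lₙ` generate `𝓝ˢ Δ`.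
-/

open Set Filter Topology Uniformity

section

variable {X : Type*} [TopologicalSpace X]

theorem nhdsSet_eq_iInf_principal_of_isCompact {ι : Type*} [Nonempty ι] {K : Set X}
    {L : ι → Set X} (hL : ∀ i, L i ∈ 𝓝ˢ K) (hL_compact : ∀ i, IsCompact (L i))
    (hL_closed : ∀ i, IsClosed (L i)) (hLK : ⋂ i, L i ⊆ K) :
    𝓝ˢ K = ⨅ i, 𝓟 (L i) := by
  refine le_antisymm (le_iInf fun i => le_principal_iff.2 (hL i)) ?_
  rw [(hasBasis_nhdsSet K).ge_iff]
  rintro O ⟨hO, hKO⟩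
  let i₀ := Classical.arbitrary ι
  have hdisj : (L i₀ \ O) ∩ ⋂ i, L i = ∅ :=
    eq_empty_of_forall_notMem fun x hx => hx.1.2 (hKO (hLK hx.2))
  obtain ⟨u, hu⟩ := ((hL_compact i₀).diff hO).elim_finite_subfamily_closed L hL_closed hdisj
  have hmem : L i₀ ∩ ⋂ i ∈ u, L i ∈ ⨅ i, 𝓟 (L i) :=
    inter_mem (mem_iInf_of_mem i₀ (mem_principal_self _))
      ((biInter_mem u.finite_toSet).2 fun i _ => mem_iInf_of_mem i (mem_principal_self _))
  refine mem_of_superset hmem fun x hx => ?_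
  by_contra hxO
  exact hu.subset ⟨⟨hx.1, hxO⟩, hx.2⟩

theorem IsGδ.isCountablyGenerated_nhdsSet [LocallyCompactSpace X] [RegularSpace X] {K : Set X}
    (hG : IsGδ K) (hK : IsCompact K) : (𝓝ˢ K).IsCountablyGenerated := by
  obtain ⟨U, hU_open, rfl⟩ := hG.eq_iInter_nat
  have hU : ∀ n, U n ∈ 𝓝ˢ (⋂ n, U n) := fun n =>
    (hU_open n).mem_nhdsSet.2 (iInter_subset U n)
  choose L hL hLU using fun n => hK.nhdsSet_basis_isCompact_isClosed.mem_iff.1 (hU n)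
  exact isCountablyGenerated_of_seq ⟨L, nhdsSet_eq_iInf_principal_of_isCompact
    (fun n => (hL n).1) (fun n => (hL n).2.1) (fun n => (hL n).2.2) (iInter_mono hLU)⟩

end

theorem sneider (X : Type*) [TopologicalSpace X] [CompactSpace X] [T2Space X] :
    TopologicalSpace.MetrizableSpace X ↔
      ∃ U : ℕ → Set (X × X), (∀ n, IsOpen (U n)) ∧ Set.diagonal X = ⋂ n, U n := by
  rw [← isGδ_iff_eq_iInter_nat]
  refine ⟨fun _ => isClosed_diagonal.isGδ, fun hG => ?_⟩
  let _ : UniformSpace X := uniformSpaceOfCompactR1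
  have : (𝓤 X).IsCountablyGenerated :=
    nhdsSet_diagonal_eq_uniformity (α := X) ▸ hG.isCountablyGenerated_nhdsSet isCompact_diagonal
  exact UniformSpace.metrizableSpace
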